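/- Let T be a finite type, let G be an abelian group in which 4g = 0 for every g ∈ G, and let g : T → G be a family of elements. Define s : (T → ℤ/2ℤ) → G by s(a) = Σ_{t ∈ T} val(a(t)) · g(t), where val(a(t)) ∈ {0,1} is the canonical lift of a(t) to the natural numbers and · denotes the natural-number scalar action. Then: (i) s is quadratic; and (ii) if π : G → (T → ℤ/2ℤ) is an additive homomorphism such that π(g(t)) is the indicator function of t (the function equal to 1 at t and 0 elsewhere) for every t ∈ T, then π(s(a)) = a for all a, i.e., s is a section of π. -/
import Mathlib


/-- Cross-effect of a set-function between abelian groups. -/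
def crossEffect {G H : Type*} [AddCommGroup G] [AddCommGroup H] (f : G → H) (a b : G) : H :=
  f (a + b) - f a - f b + f 0

/-- A function is quadratic (Gusarov–Vassiliev–Podkorytov) if its cross-effect is
additive in each variable separately. -/
def IsQuadratic {G H : Type*} [AddCommGroup G] [AddCommGroup H] (f : G → H) : Prop :=
  (∀ a a' b : G, crossEffect f (a + a') b = crossEffect f a b + crossEffect f a' b) ∧
  (∀ a b b' : G, crossEffect f a (b + b') = crossEffect f a b + crossEffect f a b')

private lemma qs_aux0 (x y : ZMod 2) : (x + y).val + 2 * (x.val * y.val) = x.val + y.val := by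
  revert x y; decide

private lemma qs_aux1 (x x' y : ZMod 2) :
    2 * (x + x').val * y.val + 4 * (x.val * x'.val * y.val)
      = 2 * x.val * y.val + 2 * x'.val * y.val := by
  revert x x' y; decide

private lemma qs_smul_eq {G : Type*} [AddCommGroup G] (h4 : ∀ g : G, 4 • g = 0)
    {m n k : ℕ} (h : m + 4 * k = n) (c : G) : m • c = n • c := by
  subst h
  rw [add_nsmul, mul_nsmul', h4 (k • c), add_zero]

/-- For a 4-torsion abelian group `G` and a family `g : T → G`, the map
`s(a) = Σ_t val(a t) • g t` is quadratic, and is a section of any additive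
homomorphism `π : G → (T → ZMod 2)` sending each `g t` to the indicator of `t`. -/
theorem quadratic_section {T : Type*} [Fintype T] [DecidableEq T] {G : Type*} [AddCommGroup G]
    (h4 : ∀ g : G, 4 • g = 0) (g : T → G) :
    IsQuadratic (fun a : T → ZMod 2 => ∑ t, (a t).val • g t) ∧
    ∀ π : G →+ (T → ZMod 2),
      (∀ t : T, π (g t) = fun t' => if t' = t then 1 else 0) →
      ∀ a : T → ZMod 2, π (∑ t, (a t).val • g t) = a := by
  set f : (T → ZMod 2) → G := fun a => ∑ t, (a t).val • g t with hf
  set D : (T → ZMod 2) → (T → ZMod 2) → G :=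
    fun a b => ∑ t, (2 * (a t).val * (b t).val) • g t with hD
  have hf0 : f 0 = 0 := by
    simp [hf]
  have hkey : ∀ a b, f (a + b) = f a + f b - D a b := by
    intro a b
    have : f (a + b) + D a b = f a + f b := by
      rw [hf, hD, ← Finset.sum_add_distrib, ← Finset.sum_add_distrib]
      refine Finset.sum_congr rfl fun t _ => ?_
      rw [Pi.add_apply, ← add_nsmul, ← add_nsmul]
      congr 1
      rw [mul_assoc]
      exact qs_aux0 (a t) (b t)
    linear_combination (norm := abel) this
  have hce : ∀ a b, crossEffect f a b = -D a b := by
    intro a b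
    rw [crossEffect, hkey, hf0]
    abel
  have hDadd : ∀ a a' b, D (a + a') b = D a b + D a' b := by
    intro a a' b
    rw [hD, ← Finset.sum_add_distrib]
    refine Finset.sum_congr rfl fun t _ => ?_
    rw [Pi.add_apply, ← add_nsmul]
    exact qs_smul_eq h4 (qs_aux1 (a t) (a' t) (b t)) (g t)
  have hDcomm : ∀ a b, D a b = D b a := by
    intro a b
    refine Finset.sum_congr rfl fun t _ => ?_
    rw [mul_right_comm]
  constructor
  · constructor
    · intro a a' b
      rw [hce, hce, hce, hDadd]
      abel
    · intro a b b'
      rw [hce, hce, hce, hDcomm a (b + b'), hDadd, hDcomm b a, hDcomm b' a]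
      abel
  · intro π hπ a
    rw [map_sum]
    funext t'
    have h1 : ∀ x : ZMod 2, x.val • (1 : ZMod 2) = x := by decide
    simp only [map_nsmul, hπ, Finset.sum_apply, Pi.smul_apply, smul_ite, smul_zero]
    rw [Finset.sum_ite_eq]
    simp [h1]
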